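/- (Decay of the truncated Airy kernel to the right.) Let j ∈ {0,1}. There exists C such that for all real s > 0 and all y ≥ 2 + s/2, the oscillatory integral K(s,y) = p.v. ∫_ℝ e^{isξ³} e^{iyξ} ξ^j dξ satisfies |K(s,y)| ≤ C y^{-100} ⟨s⟩^{-100}. -/

import Mathlib

open MeasureTheory Filter
open scoped Topology Real

lemma aux_exp_neg_le (x : ℝ) (hx : 0 < x) (n : ℕ) (hn : 0 < n) :
    Real.exp (-x) ≤ ((n : ℝ) / x) ^ n := by
  have h1 : x / n ≤ Real.exp (x / n) := by
    have := Real.add_one_le_exp (x / n); linarith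
  have h0 : (0:ℝ) ≤ x / n := by positivity
  have h2 : (x / n) ^ n ≤ Real.exp (x / n) ^ n := pow_le_pow_left₀ h0 h1 n
  have h3 : Real.exp (x / n) ^ n = Real.exp x := by
    rw [← Real.exp_nat_mul]
    congr 1
    field_simp
  rw [Real.exp_neg]
  rw [h3] at h2
  have hxn : (0:ℝ) < (x / n) ^ n := by positivity
  calc (Real.exp x)⁻¹ ≤ ((x / n) ^ n)⁻¹ := by
        apply inv_anti₀ hxn h2
    _ = ((n:ℝ)/x)^n := by rw [← inv_pow]; congr 1; field_simp

lemma aux_abs_mul_exp (a x : ℝ) (ha : 0 < a) :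
    |x| * Real.exp (-a * x ^ 2) ≤ Real.sqrt (1/a) * Real.exp (-(a/2) * x ^ 2) := by
  have h1 : |x| ≤ Real.sqrt (1/a) * Real.exp ((a/2) * x ^ 2) := by
    have h2 : |x| ≤ Real.sqrt (1/a) * (1 + (a/2) * x ^ 2) := by
      have h3 : |x| = Real.sqrt (x ^ 2) := (Real.sqrt_sq_eq_abs x).symm
      rw [h3, show Real.sqrt (1/a) * (1 + (a/2) * x ^ 2)
            = Real.sqrt (1/a * (1 + (a/2) * x^2)^2) by
          rw [Real.sqrt_mul (by positivity), Real.sqrt_sq (by positivity)]]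
      apply Real.sqrt_le_sqrt
      have : 0 < a := ha
      rw [div_mul_eq_mul_div, one_mul, le_div_iff₀ this]
      nlinarith [sq_nonneg x, sq_nonneg (a * x^2), sq_nonneg (1 - (a/2)*x^2)]
    refine h2.trans ?_
    have := Real.add_one_le_exp ((a/2) * x ^ 2)
    have hs : (0:ℝ) ≤ Real.sqrt (1/a) := Real.sqrt_nonneg _
    nlinarith
  calc |x| * Real.exp (-a * x ^ 2)
      ≤ (Real.sqrt (1/a) * Real.exp ((a/2) * x ^ 2)) * Real.exp (-a * x ^ 2) := by
        apply mul_le_mul_of_nonneg_right h1 (Real.exp_nonneg _)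
    _ = Real.sqrt (1/a) * Real.exp (-(a/2) * x ^ 2) := by
        rw [mul_assoc, ← Real.exp_add]; ring_nf

lemma aux_int_exp_neg (c T : ℝ) (hc : 0 < c) (hT : 0 ≤ T) :
    ∫ t in (0:ℝ)..T, Real.exp (-(c * t)) ≤ 1 / c := by
  have hD : ∀ t ∈ Set.uIcc (0:ℝ) T,
      HasDerivAt (fun u => -Real.exp (-(c * u)) / c) (Real.exp (-(c * t))) t := by
    intro t _
    have h1 : HasDerivAt (fun u : ℝ => -(c * u)) (-c) t := by
      simpa using (hasDerivAt_id t).const_mul (-c)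
    have h2 := (h1.exp.neg).div_const c
    rw [show (Real.exp (-(c*t))) = -(Real.exp (-(c * t)) * -c) / c by field_simp]
    exact h2
  rw [intervalIntegral.integral_eq_sub_of_hasDerivAt hD
    ((Continuous.intervalIntegrable (by continuity) _ _))]
  have := Real.exp_pos (-(c*T))
  have h0 : Real.exp (-(c*0)) = 1 := by norm_num
  rw [h0]
  rw [div_sub_div_same, div_le_div_iff₀ hc hc]
  nlinarith

lemma aux_norm_f (s y x t : ℝ) (j : ℕ) (hj : j ≤ 1) (ht : 0 ≤ t) :
    ‖Complex.exp (Complex.I * ((s:ℂ) * ((x:ℂ) + (t:ℂ) * Complex.I) ^ 3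
        + ((y:ℂ)) * ((x:ℂ) + (t:ℂ) * Complex.I))) * ((x:ℂ) + (t:ℂ) * Complex.I) ^ j‖
      ≤ Real.exp (s * t ^ 3 - 3 * s * x ^ 2 * t - y * t) * (1 + |x| + t) := by
  rw [norm_mul, norm_pow]
  have hre : (Complex.I * ((s:ℂ) * ((x:ℂ) + (t:ℂ) * Complex.I) ^ 3
      + ((y:ℂ)) * ((x:ℂ) + (t:ℂ) * Complex.I))).re = s * t ^ 3 - 3 * s * x ^ 2 * t - y * t := by
    simp [Complex.mul_re, Complex.mul_im, Complex.add_re, Complex.add_im, pow_succ]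
    ring
  have hnexp : ‖Complex.exp (Complex.I * ((s:ℂ) * ((x:ℂ) + (t:ℂ) * Complex.I) ^ 3
      + ((y:ℂ)) * ((x:ℂ) + (t:ℂ) * Complex.I)))‖
      = Real.exp (s * t ^ 3 - 3 * s * x ^ 2 * t - y * t) := by
    rw [Complex.norm_exp, hre]
  rw [hnexp]
  have hz : ‖(x:ℂ) + (t:ℂ) * Complex.I‖ ≤ |x| + t := by
    refine (norm_add_le _ _).trans ?_
    simp [abs_of_nonneg ht]
  have h1 : ‖(x:ℂ) + (t:ℂ) * Complex.I‖ ^ j ≤ (1 + |x| + t) ^ j := by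
    apply pow_le_pow_left₀ (norm_nonneg _)
    linarith
  have h2 : (1 + |x| + t) ^ j ≤ (1 + |x| + t) ^ 1 := by
    apply pow_le_pow_right₀ (by have := abs_nonneg x; linarith) hj
  apply mul_le_mul_of_nonneg_left _ (Real.exp_nonneg _)
  simpa using h1.trans h2

set_option maxHeartbeats 2000000 in
/-- Decay of the truncated Airy kernel to the right: for `j ∈ {0,1}` there is `C` such that
for all `s > 0` and `y ≥ 2 + s/2`, the principal-value oscillatory integral
`K(s,y) = p.v. ∫ e^{isξ³ + iyξ} ξ^j dξ` (interpreted as the limit of `∫_{-R}^R`) satisfies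
`|K(s,y)| ≤ C y^{-100} ⟨s⟩^{-100}`. -/
theorem truncated_airy_kernel_decay (j : ℕ) (hj : j ≤ 1) :
    ∃ C : ℝ, 0 < C ∧
      ∀ s y : ℝ, 0 < s → 2 + s / 2 ≤ y →
      ∀ K : ℂ,
        Tendsto (fun R : ℝ => ∫ ξ in (-R)..R,
            Complex.exp (Complex.I * (s * ξ ^ 3 + y * ξ)) * (ξ : ℂ) ^ j)
          atTop (𝓝 K) →
        ‖K‖ ≤ C * y ^ (-(100 : ℝ)) * (Real.sqrt (1 + s ^ 2)) ^ (-(100 : ℝ)) := by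
  refine ⟨2 ^ 100 * (38 * 303 ^ 202 * 3 ^ 200), by positivity, ?_⟩
  intro s y hs hy K hK
  set f : ℂ → ℂ := fun z =>
    Complex.exp (Complex.I * ((s : ℂ) * z ^ 3 + (y : ℂ) * z)) * z ^ j with hfdef
  have hy2 : 2 ≤ y := by linarith
  have hy0 : 0 < y := by linarith
  have hs2y : s ≤ 2 * y := by linarith
  set τ := Real.sqrt (y / (3 * s)) with hτdef
  have hτpos : 0 < τ := Real.sqrt_pos.mpr (by positivity)
  have hτsq : τ ^ 2 = y / (3 * s) := Real.sq_sqrt (by positivity)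
  have haτ : 3 * s * τ * τ = y := by
    have h1 : τ * τ = y / (3 * s) := by rw [← pow_two]; exact hτsq
    have h2 : 3 * s * (τ * τ) = y := by rw [h1]; field_simp
    linarith [h2]
  set a := 3 * s * τ with hadef
  have hapos : 0 < a := by positivity
  have hτ3 : (1 : ℝ) / 3 ≤ τ := by
    rw [hτdef, show (1:ℝ)/3 = Real.sqrt ((1/3)^2) by rw [Real.sqrt_sq]; norm_num]
    apply Real.sqrt_le_sqrt
    rw [le_div_iff₀ (by positivity)]
    nlinarith
  set u := y * τ with hudef
  have hupos : 0 < u := by positivity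
  have hu23 : 2 / 3 ≤ u := by nlinarith
  have huy : y / 3 ≤ u := by nlinarith
  have hτu : τ ≤ u := by nlinarith
  have hexp_eq : s * τ ^ 3 - y * τ = -(2 / 3) * u := by
    have h1 : s * τ ^ 3 = y * τ / 3 := by
      have h2 : s * τ ^ 3 = s * τ * τ ^ 2 := by ring
      rw [h2, hτsq]
      field_simp
    rw [h1, hudef]; ring
  -- differentiability
  have hfd : Differentiable ℂ f := by
    apply Differentiable.mul
    · apply Complex.differentiable_exp.comp
      apply Differentiable.const_mul
      exact ((differentiable_pow 3).const_mul _).add (differentiable_id.const_mul _)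
    · exact differentiable_pow j
  -- pointwise bound
  have hptf : ∀ x t : ℝ, 0 ≤ t → ‖f ((x : ℂ) + (t : ℂ) * Complex.I)‖
      ≤ Real.exp (s * t ^ 3 - 3 * s * x ^ 2 * t - y * t) * (1 + |x| + t) := by
    intro x t ht
    exact aux_norm_f s y x t j hj ht
  -- majorant
  set c₀ := Real.exp (-(2/3) * u) * (1 + τ + Real.sqrt (1 / a)) with hc0def
  have hc0pos : 0 < c₀ := by positivity
  set g : ℝ → ℝ := fun ξ => c₀ * Real.exp (-(a / 2) * ξ ^ 2) with hgdef
  have hgint : Integrable g := (integrable_exp_neg_mul_sq (by positivity : (0:ℝ) < a/2)).const_mul c₀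
  have hgnn : ∀ ξ, 0 ≤ g ξ := fun ξ => by positivity
  set B := ∫ ξ : ℝ, g ξ with hBdef
  have hBval : B = c₀ * Real.sqrt (π / (a / 2)) := by
    rw [hBdef, hgdef]
    rw [MeasureTheory.integral_const_mul, integral_gaussian]
  -- horizontal pointwise bound
  have hhoriz : ∀ x : ℝ, ‖f ((x : ℂ) + (τ : ℂ) * Complex.I)‖ ≤ g x := by
    intro x
    refine (hptf x τ hτpos.le).trans ?_
    have e0 : s * τ ^ 3 - 3 * s * x ^ 2 * τ - y * τ
        = -(2/3) * u + -a * x ^ 2 := by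
      have e0' : s * τ ^ 3 - 3 * s * x ^ 2 * τ - y * τ
          = (s * τ ^ 3 - y * τ) + -(3 * s * τ) * x ^ 2 := by ring
      rw [e0', hexp_eq, ← hadef]
    rw [e0, Real.exp_add]
    have k1 : Real.exp (-a * x ^ 2) * (1 + τ)
        ≤ (1 + τ) * Real.exp (-(a / 2) * x ^ 2) := by
      rw [mul_comm]
      apply mul_le_mul_of_nonneg_left _ (by positivity)
      apply Real.exp_le_exp.mpr
      nlinarith [sq_nonneg x]
    have k2 := aux_abs_mul_exp a x hapos
    have key : Real.exp (-a * x ^ 2) * (1 + |x| + τ)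
        ≤ (1 + τ + Real.sqrt (1 / a)) * Real.exp (-(a / 2) * x ^ 2) := by
      have expand : Real.exp (-a * x ^ 2) * (1 + |x| + τ)
          = Real.exp (-a * x ^ 2) * (1 + τ) + |x| * Real.exp (-a * x ^ 2) := by ring
      have expand2 : (1 + τ + Real.sqrt (1 / a)) * Real.exp (-(a / 2) * x ^ 2)
          = (1 + τ) * Real.exp (-(a / 2) * x ^ 2)
            + Real.sqrt (1 / a) * Real.exp (-(a / 2) * x ^ 2) := by ring
      rw [expand, expand2]
      exact add_le_add k1 k2
    calc Real.exp (-(2/3) * u) * Real.exp (-a * x ^ 2) * (1 + |x| + τ)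
        = Real.exp (-(2/3) * u) * (Real.exp (-a * x ^ 2) * (1 + |x| + τ)) := by ring
      _ ≤ Real.exp (-(2/3) * u) * ((1 + τ + Real.sqrt (1 / a)) * Real.exp (-(a / 2) * x ^ 2)) :=
          mul_le_mul_of_nonneg_left key (Real.exp_nonneg _)
      _ = g x := by rw [hgdef, hc0def]; ring
  -- horizontal integral bound
  have hJ : ∀ R : ℝ, 0 ≤ R →
      ‖∫ x in (-R)..R, f ((x : ℂ) + (τ : ℂ) * Complex.I)‖ ≤ B := by
    intro R hR
    have hle : -R ≤ R := by linarith
    refine (intervalIntegral.norm_integral_le_integral_norm hle).trans ?_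
    have hcf : Continuous fun x : ℝ => ‖f ((x : ℂ) + (τ : ℂ) * Complex.I)‖ := by
      apply Continuous.norm
      exact hfd.continuous.comp (by fun_prop)
    have step1 : (∫ x in (-R)..R, ‖f ((x : ℂ) + (τ : ℂ) * Complex.I)‖)
        ≤ ∫ x in (-R)..R, g x := by
      apply intervalIntegral.integral_mono_on hle (hcf.intervalIntegrable _ _)
        hgint.intervalIntegrable
      intro x _
      exact hhoriz x
    refine step1.trans ?_
    rw [intervalIntegral.integral_of_le hle]
    exact setIntegral_le_integral hgint (Filter.Eventually.of_forall hgnn)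
  -- vertical integral bound
  have hV : ∀ x : ℝ, x ≠ 0 →
      ‖∫ t in (0:ℝ)..τ, f ((x : ℂ) + (t : ℂ) * Complex.I)‖
        ≤ Real.exp (s * τ ^ 3) * (1 + |x| + τ) * (1 / (3 * s * x ^ 2)) := by
    intro x hx
    have hx2 : 0 < x ^ 2 := by positivity
    refine (intervalIntegral.norm_integral_le_integral_norm hτpos.le).trans ?_
    have hb1 : ∀ t ∈ Set.Icc (0:ℝ) τ, ‖f ((x : ℂ) + (t : ℂ) * Complex.I)‖
        ≤ Real.exp (s * τ ^ 3) * (1 + |x| + τ) * Real.exp (-(3 * s * x ^ 2 * t)) := by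
      intro t ht
      refine (hptf x t ht.1).trans ?_
      have e1 : Real.exp (s * t ^ 3 - 3 * s * x ^ 2 * t - y * t)
          ≤ Real.exp (s * τ ^ 3) * Real.exp (-(3 * s * x ^ 2 * t)) := by
        rw [← Real.exp_add]
        apply Real.exp_le_exp.mpr
        have h3 : t ^ 3 ≤ τ ^ 3 := pow_le_pow_left₀ ht.1 ht.2 3
        nlinarith [ht.1, mul_nonneg hy0.le ht.1]
      have e2 : 1 + |x| + t ≤ 1 + |x| + τ := by linarith [ht.2]
      calc Real.exp (s * t ^ 3 - 3 * s * x ^ 2 * t - y * t) * (1 + |x| + t)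
          ≤ (Real.exp (s * τ ^ 3) * Real.exp (-(3 * s * x ^ 2 * t))) * (1 + |x| + τ) := by
            apply mul_le_mul e1 e2 (by have := abs_nonneg x; linarith [ht.1]) (by positivity)
        _ = Real.exp (s * τ ^ 3) * (1 + |x| + τ) * Real.exp (-(3 * s * x ^ 2 * t)) := by ring
    have hcf : Continuous fun t : ℝ => ‖f ((x : ℂ) + (t : ℂ) * Complex.I)‖ := by
      apply Continuous.norm
      exact hfd.continuous.comp (by fun_prop)
    have step1 : (∫ t in (0:ℝ)..τ, ‖f ((x : ℂ) + (t : ℂ) * Complex.I)‖)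
        ≤ ∫ t in (0:ℝ)..τ,
            Real.exp (s * τ ^ 3) * (1 + |x| + τ) * Real.exp (-(3 * s * x ^ 2 * t)) := by
      apply intervalIntegral.integral_mono_on hτpos.le (hcf.intervalIntegrable _ _)
        (Continuous.intervalIntegrable (by fun_prop) _ _) hb1
    refine step1.trans ?_
    rw [intervalIntegral.integral_const_mul]
    apply mul_le_mul_of_nonneg_left
      (aux_int_exp_neg (3 * s * x ^ 2) τ (by positivity) hτpos.le) (by positivity)
  -- contour identity
  have hrect : ∀ R : ℝ, (∫ x in (-R)..R, f ((x : ℂ)))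
      = (∫ x in (-R)..R, f ((x : ℂ) + (τ : ℂ) * Complex.I))
        - Complex.I • (∫ t in (0:ℝ)..τ, f ((R : ℂ) + (t : ℂ) * Complex.I))
        + Complex.I • (∫ t in (0:ℝ)..τ, f (((-R : ℝ) : ℂ) + (t : ℂ) * Complex.I)) := by
    intro R
    have h := Complex.integral_boundary_rect_eq_zero_of_differentiableOn f
      ⟨-R, 0⟩ ⟨R, τ⟩ hfd.differentiableOn
    simp only [Complex.ofReal_zero, zero_mul, add_zero] at h
    have h' : (∫ x in (-R)..R, f ((x : ℂ)))
        - (∫ x in (-R)..R, f ((x : ℂ) + (τ : ℂ) * Complex.I))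
        + Complex.I • (∫ t in (0:ℝ)..τ, f ((R : ℂ) + (t : ℂ) * Complex.I))
        - Complex.I • (∫ t in (0:ℝ)..τ, f (((-R : ℝ) : ℂ) + (t : ℂ) * Complex.I)) = 0 := h
    have h'' := sub_eq_zero.mp h'
    linear_combination h'
  -- bound on truncated integrals
  set D : ℝ → ℝ := fun R =>
    2 * (Real.exp (s * τ ^ 3) * (1 + R + τ) * (1 / (3 * s * R ^ 2))) with hDdef
  have hIbound : ∀ R : ℝ, 1 ≤ R → ‖∫ x in (-R)..R, f ((x : ℂ))‖ ≤ B + D R := by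
    intro R hR
    have hR0 : (0:ℝ) < R := by linarith
    rw [hrect R]
    have n1 := hJ R hR0.le
    have n2 := hV R hR0.ne'
    have n3 := hV (-R) (by intro h; rw [neg_eq_zero] at h; exact hR0.ne' h)
    rw [abs_of_pos hR0] at n2
    rw [abs_neg, abs_of_pos hR0] at n3
    have hnR : (-R : ℝ) ^ 2 = R ^ 2 := by ring
    rw [hnR] at n3
    have hnorm : ‖(∫ x in (-R)..R, f ((x : ℂ) + (τ : ℂ) * Complex.I))
        - Complex.I • (∫ t in (0:ℝ)..τ, f ((R : ℂ) + (t : ℂ) * Complex.I))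
        + Complex.I • (∫ t in (0:ℝ)..τ, f (((-R : ℝ) : ℂ) + (t : ℂ) * Complex.I))‖
        ≤ ‖∫ x in (-R)..R, f ((x : ℂ) + (τ : ℂ) * Complex.I)‖
          + ‖∫ t in (0:ℝ)..τ, f ((R : ℂ) + (t : ℂ) * Complex.I)‖
          + ‖∫ t in (0:ℝ)..τ, f (((-R : ℝ) : ℂ) + (t : ℂ) * Complex.I)‖ := by
      refine (norm_add_le _ _).trans ?_
      have hsub := norm_sub_le (∫ x in (-R)..R, f ((x : ℂ) + (τ : ℂ) * Complex.I))
        (Complex.I • (∫ t in (0:ℝ)..τ, f ((R : ℂ) + (t : ℂ) * Complex.I)))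
      simp only [norm_smul, Complex.norm_I, one_mul] at hsub ⊢
      linarith
    refine hnorm.trans ?_
    simp only [hDdef]
    linarith
  -- D tends to 0
  have hDto : Tendsto D atTop (𝓝 0) := by
    have h1 : D =ᶠ[atTop] fun R => (2 * Real.exp (s * τ ^ 3) / (3 * s)) * ((1 + τ) / R ^ 2)
        + (2 * Real.exp (s * τ ^ 3) / (3 * s)) * (1 / R) := by
      filter_upwards [eventually_gt_atTop 0] with R hR
      simp only [hDdef]
      field_simp
      ring
    have h2 : Tendsto (fun R : ℝ => (1 + τ) / R ^ 2) atTop (𝓝 0) := by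
      apply Tendsto.div_atTop tendsto_const_nhds
      exact tendsto_pow_atTop (by norm_num)
    have h3 : Tendsto (fun R : ℝ => 1 / R) atTop (𝓝 0) := by
      simpa using tendsto_inv_atTop_zero
    rw [tendsto_congr' h1]
    simpa using (h2.const_mul _).add (h3.const_mul _)
  -- conclude ‖K‖ ≤ B
  have hKB : ‖K‖ ≤ B := by
    have hn : Tendsto (fun R : ℝ => ‖∫ x in (-R)..R, f ((x : ℂ))‖) atTop (𝓝 ‖K‖) := hK.norm
    have hlim : Tendsto (fun R : ℝ => B + D R) atTop (𝓝 (B + 0)) :=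
      tendsto_const_nhds.add hDto
    have hfin := le_of_tendsto_of_tendsto hn hlim
      (by filter_upwards [eventually_ge_atTop 1] with R hR using hIbound R hR)
    simpa using hfin
  -- numeric estimates
  have h1a : (1:ℝ) / a = τ / y := by
    rw [div_eq_div_iff hapos.ne' hy0.ne']
    linarith [haτ]
  have hsq1 : Real.sqrt (1 / a) ≤ 1 + τ := by
    rw [h1a]
    have hττ : τ / y ≤ (1 + τ) ^ 2 := by
      have hd : τ / y ≤ τ := div_le_self hτpos.le (by linarith)
      nlinarith
    calc Real.sqrt (τ / y) ≤ Real.sqrt ((1 + τ) ^ 2) := Real.sqrt_le_sqrt hττ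
      _ = 1 + τ := Real.sqrt_sq (by positivity)
  have hsq2 : Real.sqrt (π / (a / 2)) ≤ 3 * (1 + τ) := by
    have hπ := Real.pi_le_four
    have hπ0 := Real.pi_pos
    have he : π / (a / 2) = 2 * π * (1 / a) := by field_simp
    have hππ : π / (a / 2) ≤ (3 * (1 + τ)) ^ 2 := by
      rw [he, h1a]
      have hd : τ / y ≤ τ := div_le_self hτpos.le (by linarith)
      nlinarith
    calc Real.sqrt (π / (a / 2)) ≤ Real.sqrt ((3 * (1 + τ)) ^ 2) := Real.sqrt_le_sqrt hππ
      _ = 3 * (1 + τ) := Real.sqrt_sq (by positivity)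
  have hB6 : B ≤ 6 * (1 + u) ^ 2 * Real.exp (-(2/3) * u) := by
    rw [hBval, hc0def]
    have s2nn : (0:ℝ) ≤ Real.sqrt (π / (a / 2)) := Real.sqrt_nonneg _
    have e1 : (1 + τ + Real.sqrt (1 / a)) ≤ 2 * (1 + τ) := by linarith
    have epos := Real.exp_pos (-(2/3) * u)
    calc Real.exp (-(2/3) * u) * (1 + τ + Real.sqrt (1 / a)) * Real.sqrt (π / (a / 2))
        ≤ Real.exp (-(2/3) * u) * (2 * (1 + τ)) * (3 * (1 + τ)) := by
          apply mul_le_mul _ hsq2 s2nn (by positivity)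
          apply mul_le_mul_of_nonneg_left e1 epos.le
      _ = 6 * (1 + τ) ^ 2 * Real.exp (-(2/3) * u) := by ring
      _ ≤ 6 * (1 + u) ^ 2 * Real.exp (-(2/3) * u) := by
          apply mul_le_mul_of_nonneg_right _ epos.le
          nlinarith
  have hexpu : Real.exp (-(2/3) * u) ≤ (303 / u) ^ 202 := by
    have h1 := aux_exp_neg_le ((2/3) * u) (by positivity) 202 (by norm_num)
    have h2 : ((202:ℕ):ℝ) / ((2/3) * u) = 303 / u := by
      push_cast
      field_simp
      ring
    rw [← neg_mul] at h1
    rw [h2] at h1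
    exact h1
  have hBfin : B ≤ 38 * 303 ^ 202 * 3 ^ 200 / y ^ 200 := by
    have step1 : B ≤ 6 * ((5/2) * u) ^ 2 * ((303 / u) ^ 202) := by
      refine hB6.trans ?_
      have e1 : 6 * (1 + u)^2 ≤ 6 * ((5/2)*u)^2 := by nlinarith
      calc 6 * (1 + u) ^ 2 * Real.exp (-(2/3) * u)
          ≤ 6 * (1 + u) ^ 2 * ((303 / u) ^ 202) :=
            mul_le_mul_of_nonneg_left hexpu (by positivity)
        _ ≤ 6 * ((5/2) * u) ^ 2 * ((303 / u) ^ 202) := by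
            apply mul_le_mul_of_nonneg_right e1 (by positivity)
    have step2 : 6 * ((5/2) * u) ^ 2 * ((303 / u) ^ 202) = (75/2) * 303 ^ 202 / u ^ 200 := by
      rw [div_pow]
      rw [show (202 : ℕ) = 200 + 2 by norm_num, pow_add]
      field_simp
      ring
    have step3 : (75/2 : ℝ) * 303 ^ 202 / u ^ 200 ≤ 38 * 303 ^ 202 / u ^ 200 := by
      apply div_le_div_of_nonneg_right ?_ (by positivity)
      have : (0:ℝ) < (303:ℝ) ^ 202 := by positivity
      nlinarith
    have step4 : (38:ℝ) * 303 ^ 202 / u ^ 200 ≤ 38 * 303 ^ 202 / (y/3) ^ 200 := by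
      apply div_le_div_of_nonneg_left (by positivity) (by positivity)
      exact pow_le_pow_left₀ (by positivity) huy 200
    have step5 : (38:ℝ) * 303 ^ 202 / (y/3) ^ 200 = 38 * 303 ^ 202 * 3 ^ 200 / y ^ 200 := by
      rw [div_pow]
      field_simp
    calc B ≤ 6 * ((5/2) * u) ^ 2 * ((303 / u) ^ 202) := step1
      _ = (75/2) * 303 ^ 202 / u ^ 200 := step2
      _ ≤ 38 * 303 ^ 202 / u ^ 200 := step3
      _ ≤ 38 * 303 ^ 202 / (y/3) ^ 200 := step4
      _ = 38 * 303 ^ 202 * 3 ^ 200 / y ^ 200 := step5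
  -- final rpow juggling
  set w := Real.sqrt (1 + s ^ 2) with hwdef
  have hw0 : 0 < w := Real.sqrt_pos.mpr (by positivity)
  have hw2y : w ≤ 2 * y := by
    rw [hwdef, show (2*y) = Real.sqrt ((2*y)^2) from (Real.sqrt_sq (by positivity)).symm]
    apply Real.sqrt_le_sqrt
    nlinarith
  have hyr : y ^ (-(100 : ℝ)) = (y ^ (100:ℕ))⁻¹ := by
    rw [Real.rpow_neg hy0.le]
    congr 1
    rw [show ((100:ℝ)) = ((100:ℕ):ℝ) by norm_num, Real.rpow_natCast]
  have hwr : w ^ (-(100 : ℝ)) = (w ^ (100:ℕ))⁻¹ := by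
    rw [Real.rpow_neg hw0.le]
    congr 1
    rw [show ((100:ℝ)) = ((100:ℕ):ℝ) by norm_num, Real.rpow_natCast]
  rw [hyr, hwr]
  have hwpow : ((2*y) ^ (100:ℕ))⁻¹ ≤ (w ^ (100:ℕ))⁻¹ := by
    apply inv_anti₀ (by positivity)
    exact pow_le_pow_left₀ hw0.le hw2y 100
  have hkey : (38:ℝ) * 303 ^ 202 * 3 ^ 200 / y ^ 200
      = 2 ^ 100 * (38 * 303 ^ 202 * 3 ^ 200) * (y ^ (100:ℕ))⁻¹ * ((2*y) ^ (100:ℕ))⁻¹ := by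
    rw [mul_pow]
    rw [show (200 : ℕ) = 100 + 100 by norm_num, pow_add]
    field_simp
  calc ‖K‖ ≤ B := hKB
    _ ≤ 38 * 303 ^ 202 * 3 ^ 200 / y ^ 200 := hBfin
    _ = 2 ^ 100 * (38 * 303 ^ 202 * 3 ^ 200) * (y ^ (100:ℕ))⁻¹ * ((2*y) ^ (100:ℕ))⁻¹ := hkey
    _ ≤ 2 ^ 100 * (38 * 303 ^ 202 * 3 ^ 200) * (y ^ (100:ℕ))⁻¹ * (w ^ (100:ℕ))⁻¹ := by
        apply mul_le_mul_of_nonneg_left hwpow (by positivity)
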